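/- arXiv:1709.07143 — 7 statements merged into one kernel-verified Lean document; each statement's English description precedes it below -/
import Mathlib

section
/- Let H ∈ (1/2, 1) and let α, β > 0. Then α^{1-2H} f_H^{(1)}(αx) + β^{1-2H} f_H^{(2)}(βx) → 0 as x → +∞. -/
open MeasureTheory Real Filter Finset

/-- `f_H^{(1)}(x) = e^{-x}(Γ(2H) − ∫_0^x e^s s^{2H−1} ds)`. -/
noncomputable def fH1 (H x : ℝ) : ℝ :=
  Real.exp (-x) * (Real.Gamma (2 * H) - ∫ s in (0:ℝ)..x, Real.exp s * s ^ (2 * H - 1))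

/-- `f_H^{(2)}(x) = e^{x}(Γ(2H) − ∫_0^x e^{−s} s^{2H−1} ds)`. -/
noncomputable def fH2 (H x : ℝ) : ℝ :=
  Real.exp x * (Real.Gamma (2 * H) - ∫ s in (0:ℝ)..x, Real.exp (-s) * s ^ (2 * H - 1))

/-- `f_H = f_H^{(1)} + f_H^{(2)}`. -/
noncomputable def fH (H x : ℝ) : ℝ := fH1 H x + fH2 H x

/-! With `p = 2H - 1 ∈ (0, 1)` the prefactors cancel the power `x ^ p`, since
`α ^ (-p) * (α x) ^ p = x ^ p`; so it suffices that `f⁽¹⁾(x) + x ^ p → 0` and `f⁽²⁾(x) - x ^ p → 0`.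
After the substitutions `s = x + u` and `s = x - u`,
`f⁽²⁾(x) - x ^ p = ∫₀^∞ e^{-u} ((x + u) ^ p - x ^ p) du` and
`f⁽¹⁾(x) + x ^ p = e^{-x} (Γ(2H) + x ^ p) + ∫₀^x e^{-u} (x ^ p - (x - u) ^ p) du`.
Concavity of `t ↦ t ^ p` (its tangent at `x`, resp. its chord from `0` to `x`) bounds both
integrands between `0` and a multiple of `x ^ (p - 1) u e^{-u}`, so both integrals are
`O(x ^ (p - 1)) → 0`. -/

open Set Topology

lemma rpow_add_sub_rpow_le {p x u : ℝ} (hp0 : 0 ≤ p) (hp1 : p ≤ 1) (hx : 0 < x) (hu : -x ≤ u) :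
    (x + u) ^ p - x ^ p ≤ p * x ^ (p - 1) * u := by
  have hux : -1 ≤ u / x := by rwa [le_div_iff₀ hx, neg_one_mul]
  have hbern := rpow_one_add_le_one_add_mul_self hux hp0 hp1
  have hsplit : (x + u) ^ p = x ^ p * (1 + u / x) ^ p := by
    rw [← mul_rpow hx.le (by linarith), mul_add, mul_one,
      mul_div_cancel₀ _ hx.ne']
  calc (x + u) ^ p - x ^ p ≤ x ^ p * (1 + p * (u / x)) - x ^ p := by
        rw [hsplit]; gcongr
    _ = p * x ^ (p - 1) * u := by
        rw [rpow_sub_one hx.ne']; field_simp; ring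

lemma rpow_sub_rpow_sub_le {p x u : ℝ} (hp : p ≤ 1) (hx : 0 < x) (hu0 : 0 ≤ u) (hux : u ≤ x) :
    x ^ p - (x - u) ^ p ≤ x ^ (p - 1) * u := by
  have hux' : 0 ≤ 1 - u / x := by rwa [sub_nonneg, div_le_one hx]
  have hchord : 1 - u / x ≤ (1 - u / x) ^ p :=
    self_le_rpow_of_le_one hux' (by linarith [div_nonneg hu0 hx.le]) hp
  have hsplit : (x - u) ^ p = x ^ p * (1 - u / x) ^ p := by
    rw [← mul_rpow hx.le hux', mul_sub, mul_one, mul_div_cancel₀ _ hx.ne']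
  calc x ^ p - (x - u) ^ p ≤ x ^ p - x ^ p * (1 - u / x) := by
        rw [hsplit]; gcongr
    _ = x ^ (p - 1) * u := by
        rw [rpow_sub_one hx.ne']; field_simp; ring

lemma integrableOn_exp_neg_mul_rpow_Ioi {s x : ℝ} (hs : 0 < s) (hx : 0 ≤ x) :
    IntegrableOn (fun t => exp (-t) * t ^ (s - 1)) (Ioi x) :=
  (GammaIntegral_convergent hs).mono_set (Ioi_subset_Ioi hx)

lemma Gamma_sub_integral_eq_integral_Ioi {s x : ℝ} (hs : 0 < s) (hx : 0 ≤ x) :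
    Gamma s - ∫ t in (0:ℝ)..x, exp (-t) * t ^ (s - 1) = ∫ t in Ioi x, exp (-t) * t ^ (s - 1) := by
  rw [Gamma_eq_integral hs,
    ← intervalIntegral.integral_Ioi_sub_Ioi (GammaIntegral_convergent hs) hx]
  ring

lemma integral_Ioi_eq_integral_Ioi_zero_comp_add (g : ℝ → ℝ) (x : ℝ) :
    ∫ t in Ioi x, g t = ∫ u in Ioi 0, g (u + x) := by
  rw [← (measurePreserving_add_right volume x).setIntegral_preimage_emb
    (measurableEmbedding_addRight x), preimage_add_const_Ioi, sub_self]

lemma integral_exp_neg_mul_self_Ioi : ∫ u in Ioi (0:ℝ), exp (-u) * u = 1 := by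
  have := (Gamma_eq_integral two_pos).symm.trans Gamma_two
  norm_num at this
  exact this

lemma integrableOn_exp_neg_mul_self_Ioi : IntegrableOn (fun u : ℝ => exp (-u) * u) (Ioi 0) := by
  have := GammaIntegral_convergent two_pos
  norm_num at this
  exact this

lemma setIntegral_exp_neg_mul_le {s : Set ℝ} (hs : MeasurableSet s) (hs0 : s ⊆ Ioi 0)
    {f : ℝ → ℝ} {c : ℝ} (hc : 0 ≤ c) (hf0 : ∀ u ∈ s, 0 ≤ f u) (hfc : ∀ u ∈ s, f u ≤ c * u) :
    ∫ u in s, exp (-u) * f u ≤ c := by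
  have hint : IntegrableOn (fun u => c * (exp (-u) * u)) (Ioi 0) :=
    integrableOn_exp_neg_mul_self_Ioi.const_mul c
  calc ∫ u in s, exp (-u) * f u ≤ ∫ u in s, c * (exp (-u) * u) := by
        refine integral_mono_of_nonneg ?_ (hint.mono_set hs0) ?_
        · filter_upwards [ae_restrict_mem hs] with u hu
          exact mul_nonneg (exp_nonneg _) (hf0 u hu)
        · filter_upwards [ae_restrict_mem hs] with u hu
          calc exp (-u) * f u ≤ exp (-u) * (c * u) := by gcongr; exact hfc u hu
            _ = c * (exp (-u) * u) := by ring
    _ ≤ ∫ u in Ioi 0, c * (exp (-u) * u) := by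
        refine setIntegral_mono_set hint ?_ hs0.eventuallyLE
        filter_upwards [ae_restrict_mem measurableSet_Ioi] with u (hu : 0 < u)
        positivity
    _ = c := by rw [integral_const_mul, integral_exp_neg_mul_self_Ioi, mul_one]

lemma tendsto_setIntegral_exp_neg_mul_of_le_mul_rpow {s : ℝ → Set ℝ} {f : ℝ → ℝ → ℝ} {c q : ℝ}
    (hc : 0 ≤ c) (hq : q < 0) (hs : ∀ x, MeasurableSet (s x)) (hs0 : ∀ x, s x ⊆ Ioi 0)
    (hf0 : ∀ᶠ x in atTop, ∀ u ∈ s x, 0 ≤ f x u)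
    (hfc : ∀ᶠ x in atTop, ∀ u ∈ s x, f x u ≤ c * x ^ q * u) :
    Tendsto (fun x => ∫ u in s x, exp (-u) * f x u) atTop (𝓝 0) := by
  have hlim : Tendsto (fun x : ℝ => c * x ^ q) atTop (𝓝 0) := by
    simpa using (tendsto_rpow_neg_atTop (neg_pos.mpr hq)).const_mul c
  refine tendsto_of_tendsto_of_tendsto_of_le_of_le' tendsto_const_nhds hlim ?_ ?_
  · filter_upwards [hf0] with x hx
    exact setIntegral_nonneg (hs x) fun u hu => mul_nonneg (exp_nonneg _) (hx u hu)
  · filter_upwards [hf0, hfc, eventually_gt_atTop 0] with x hx0 hxc hx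
    exact setIntegral_exp_neg_mul_le (hs x) (hs0 x) (by positivity) hx0 hxc

lemma fH2_sub_rpow_eq {H x : ℝ} (hH : 0 < H) (hx : 0 ≤ x) :
    fH2 H x - x ^ (2 * H - 1)
      = ∫ u in Ioi 0, exp (-u) * ((u + x) ^ (2 * H - 1) - x ^ (2 * H - 1)) := by
  have hrpow : x ^ (2 * H - 1) = exp x * ∫ t in Ioi x, exp (-t) * x ^ (2 * H - 1) := by
    rw [integral_mul_const, integral_exp_neg_Ioi, ← mul_assoc, ← exp_add, add_neg_cancel,
      exp_zero, one_mul]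
  have hsub : (∫ t in Ioi x, exp (-t) * t ^ (2 * H - 1)) - ∫ t in Ioi x, exp (-t) * x ^ (2 * H - 1)
      = ∫ t in Ioi x, exp (-t) * (t ^ (2 * H - 1) - x ^ (2 * H - 1)) := by
    rw [← integral_sub (integrableOn_exp_neg_mul_rpow_Ioi (by positivity) hx)
      ((integrableOn_exp_neg_Ioi x).mul_const _)]
    simp only [mul_sub]
  conv_lhs => rw [fH2, Gamma_sub_integral_eq_integral_Ioi (by positivity) hx, hrpow]
  rw [← mul_sub, hsub,
    integral_Ioi_eq_integral_Ioi_zero_comp_add, ← integral_const_mul]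
  refine integral_congr_ae (Eventually.of_forall fun u => ?_)
  simp only [← mul_assoc, ← exp_add]
  ring_nf

lemma exp_neg_mul_integral_exp_mul_rpow (x q : ℝ) :
    exp (-x) * ∫ s in (0:ℝ)..x, exp s * s ^ q = ∫ u in (0:ℝ)..x, exp (-u) * (x - u) ^ q := by
  have hsubst := intervalIntegral.integral_comp_sub_left (a := 0) (b := x)
    (fun s => exp (s - x) * s ^ q) x
  simp only [sub_zero, sub_self, sub_sub_cancel_left] at hsubst
  rw [hsubst, ← intervalIntegral.integral_const_mul]
  congr with s
  rw [sub_eq_neg_add, exp_add, mul_assoc]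

lemma fH1_add_rpow_eq {H x : ℝ} (hH : 1 / 2 ≤ H) :
    fH1 H x + x ^ (2 * H - 1) = exp (-x) * (Gamma (2 * H) + x ^ (2 * H - 1))
      + ∫ u in (0:ℝ)..x, exp (-u) * (x ^ (2 * H - 1) - (x - u) ^ (2 * H - 1)) := by
  have hcont : Continuous fun u => exp (-u) * (x - u) ^ (2 * H - 1) := by
    have : 0 ≤ 2 * H - 1 := by linarith
    fun_prop (disch := assumption)
  have hsub : ∫ u in (0:ℝ)..x, exp (-u) * (x ^ (2 * H - 1) - (x - u) ^ (2 * H - 1))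
      = x ^ (2 * H - 1) * (1 - exp (-x)) - ∫ u in (0:ℝ)..x, exp (-u) * (x - u) ^ (2 * H - 1) := by
    simp only [mul_sub]
    rw [intervalIntegral.integral_sub ((by fun_prop : Continuous _).intervalIntegrable _ _)
      (hcont.intervalIntegrable _ _), intervalIntegral.integral_mul_const,
      intervalIntegral.integral_comp_neg (fun u => exp u), integral_exp, neg_zero, exp_zero]
    ring
  rw [fH1, mul_sub, exp_neg_mul_integral_exp_mul_rpow, hsub]
  ring

lemma tendsto_fH2_sub_rpow {H : ℝ} (hH : H ∈ Ioo (1 / 2 : ℝ) 1) :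
    Tendsto (fun x => fH2 H x - x ^ (2 * H - 1)) atTop (𝓝 0) := by
  obtain ⟨hH1, hH2⟩ := hH
  have hlim := tendsto_setIntegral_exp_neg_mul_of_le_mul_rpow (s := fun _ => Ioi 0)
    (f := fun x u => (u + x) ^ (2 * H - 1) - x ^ (2 * H - 1)) (c := 2 * H - 1)
    (by linarith) (by linarith : 2 * H - 1 - 1 < 0) (fun _ => measurableSet_Ioi)
    (fun _ => subset_rfl)
    (by
      filter_upwards [eventually_gt_atTop 0] with x hx u (hu : 0 < u)
      have : x ^ (2 * H - 1) ≤ (u + x) ^ (2 * H - 1) := by gcongr <;> linarith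
      exact sub_nonneg.mpr this)
    (by
      filter_upwards [eventually_gt_atTop 0] with x hx u (hu : 0 < u)
      rw [add_comm]
      exact rpow_add_sub_rpow_le (by linarith) (by linarith) hx (by linarith))
  refine hlim.congr' ?_
  filter_upwards [eventually_ge_atTop 0] with x hx
  exact (fH2_sub_rpow_eq (by linarith) hx).symm

lemma tendsto_fH1_add_rpow {H : ℝ} (hH : H ∈ Ioo (1 / 2 : ℝ) 1) :
    Tendsto (fun x => fH1 H x + x ^ (2 * H - 1)) atTop (𝓝 0) := by
  obtain ⟨hH1, hH2⟩ := hH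
  have hexp : Tendsto (fun x => exp (-x) * (Gamma (2 * H) + x ^ (2 * H - 1))) atTop (𝓝 0) := by
    have hsum := (tendsto_exp_neg_atTop_nhds_zero.mul_const (Gamma (2 * H))).add
      (tendsto_rpow_mul_exp_neg_mul_atTop_nhds_zero (2 * H - 1) 1 one_pos)
    rw [zero_mul, zero_add] at hsum
    refine hsum.congr fun x => ?_
    ring_nf
  have hint := tendsto_setIntegral_exp_neg_mul_of_le_mul_rpow (s := fun x => Ioc 0 x)
    (f := fun x u => x ^ (2 * H - 1) - (x - u) ^ (2 * H - 1)) (c := 1)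
    zero_le_one (by linarith : 2 * H - 1 - 1 < 0) (fun _ => measurableSet_Ioc)
    (fun _ => Ioc_subset_Ioi_self)
    (by
      filter_upwards with x u ⟨hu0, hux⟩
      have : (x - u) ^ (2 * H - 1) ≤ x ^ (2 * H - 1) := by gcongr <;> linarith
      exact sub_nonneg.mpr this)
    (by
      filter_upwards [eventually_gt_atTop 0] with x hx u ⟨hu0, hux⟩
      rw [one_mul]
      exact rpow_sub_rpow_sub_le (by linarith) hx hu0.le hux)
  refine (add_zero (0:ℝ) ▸ hexp.add hint).congr' ?_
  filter_upwards [eventually_ge_atTop 0] with x hx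
  rw [fH1_add_rpow_eq hH1.le, intervalIntegral.integral_of_le hx]

theorem stmt_0 (H α β : ℝ) (hH : H ∈ Set.Ioo (1/2 : ℝ) 1) (hα : 0 < α) (hβ : 0 < β) :
    Filter.Tendsto
      (fun x : ℝ => α ^ (1 - 2 * H) * fH1 H (α * x) + β ^ (1 - 2 * H) * fH2 H (β * x))
      Filter.atTop (nhds 0) := by
  have h1 := ((tendsto_fH1_add_rpow hH).comp (tendsto_id.const_mul_atTop hα)).const_mul
    (α ^ (1 - 2 * H))
  have h2 := ((tendsto_fH2_sub_rpow hH).comp (tendsto_id.const_mul_atTop hβ)).const_mul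
    (β ^ (1 - 2 * H))
  rw [mul_zero] at h1 h2
  refine (add_zero (0:ℝ) ▸ h1.add h2).congr' ?_
  filter_upwards [eventually_ge_atTop 0] with x hx
  have hcancel {γ : ℝ} (hγ : 0 < γ) :
      γ ^ (1 - 2 * H) * (γ * x) ^ (2 * H - 1) = x ^ (2 * H - 1) := by
    rw [mul_rpow hγ.le hx, ← mul_assoc, ← rpow_add hγ, sub_add_sub_cancel', sub_self, rpow_zero,
      one_mul]
  simp only [Function.comp_apply, id, mul_add, mul_sub, hcancel hα, hcancel hβ]
  ring
end

section
/- Let H ∈ (1/2, 1). Then f_H(x) is asymptotically equivalent to 2(2H−1) x^{2H−2} as x → +∞; that is, f_H(x)/(2(2H−1) x^{2H−2}) → 1 as x → +∞. -/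
/-!
Integration by parts (for `f_H^{(2)}` in the form of the recurrence
`Γ(a + 1, x) = e^{-x} x^a + a Γ(a, x)` for the upper incomplete gamma function) makes the
leading terms `∓ x^{2H-1}` of `f_H^{(1)}` and `f_H^{(2)}` cancel, leaving
`f_H(x) = e^{-x} Γ(2H) + (2H - 1) (A(x) + B(x))` with `A(x) = e^{-x} ∫_0^x e^s s^{2H-2} ds` and
`B(x) = e^x Γ(2H - 1, x)`. Both `A` and `B` are asymptotic to `x^{2H-2}`: `B` by L'Hôpital's rule,
and `A` by squeezing it between `(1 - e^{-x}) x^{2H-2}` and the bound obtained by splitting the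
integral at `x - √x`, where `s^{2H-2}` is already close to `x^{2H-2}` while `e^{s-x}` is
exponentially small in `√x` below it.
-/

open MeasureTheory Real Filter Finset

open Set Topology

lemma intervalIntegrable_mul_rpow {g : ℝ → ℝ} (hg : Continuous g) {β : ℝ} (hβ : -1 < β)
    (a b : ℝ) : IntervalIntegrable (fun s => g s * s ^ β) volume a b :=
  (intervalIntegral.intervalIntegrable_rpow' hβ).continuousOn_mul hg.continuousOn

lemma integral_exp_mul_rpow_by_parts (c : ℝ) {α : ℝ} (hα : 0 < α) {x : ℝ} (hx : 0 ≤ x) :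
    c * (∫ s in (0:ℝ)..x, exp (c * s) * s ^ α) + α * ∫ s in (0:ℝ)..x, exp (c * s) * s ^ (α - 1)
      = exp (c * x) * x ^ α := by
  have hexp : Continuous fun s => exp (c * s) := by fun_prop
  have hint₀ := intervalIntegrable_mul_rpow hexp (by linarith : -1 < α) 0 x
  have hint₁ := intervalIntegrable_mul_rpow hexp (by linarith : -1 < α - 1) 0 x
  have hcont : ContinuousOn (fun s => exp (c * s) * s ^ α) (Icc 0 x) :=
    (hexp.mul (continuous_id.rpow_const fun _ => Or.inr hα.le)).continuousOn
  have hderiv : ∀ s ∈ Ioo 0 x, HasDerivWithinAt (fun s => exp (c * s) * s ^ α)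
      (c * (exp (c * s) * s ^ α) + α * (exp (c * s) * s ^ (α - 1))) (Ioi s) s := by
    intro s hs
    have hcs : HasDerivAt (fun s => exp (c * s)) (exp (c * s) * c) s := by
      simpa using ((hasDerivAt_id s).const_mul c).exp
    exact ((hcs.mul (hasDerivAt_rpow_const (Or.inl hs.1.ne'))).congr_deriv
      (by ring)).hasDerivWithinAt
  have hFTC := intervalIntegral.integral_eq_sub_of_hasDeriv_right_of_le hx hcont hderiv
    ((hint₀.const_mul c).add (hint₁.const_mul α))
  rw [intervalIntegral.integral_add (hint₀.const_mul c) (hint₁.const_mul α),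
    intervalIntegral.integral_const_mul, intervalIntegral.integral_const_mul] at hFTC
  simpa [zero_rpow hα.ne'] using hFTC

/-- The upper incomplete gamma function `Γ(a, x) = ∫_x^∞ e^{-s} s^{a-1} ds`, for `0 < a`. -/
noncomputable def upperIncompleteGamma (a x : ℝ) : ℝ :=
  Gamma a - ∫ s in (0:ℝ)..x, exp (-s) * s ^ (a - 1)

lemma upperIncompleteGamma_add_one {a : ℝ} (ha : 0 < a) {x : ℝ} (hx : 0 ≤ x) :
    upperIncompleteGamma (a + 1) x = exp (-x) * x ^ a + a * upperIncompleteGamma a x := by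
  have h := integral_exp_mul_rpow_by_parts (-1) ha hx
  simp only [neg_one_mul] at h
  rw [upperIncompleteGamma, upperIncompleteGamma, Gamma_add_one ha.ne', add_sub_cancel_right]
  linarith

lemma hasDerivAt_upperIncompleteGamma {a : ℝ} (ha : 0 < a) {x : ℝ} (hx : 0 < x) :
    HasDerivAt (upperIncompleteGamma a) (-(exp (-x) * x ^ (a - 1))) x := by
  have hcont : ContinuousOn (fun s => exp (-s) * s ^ (a - 1)) (Ioi 0) := fun s hs =>
    ((continuous_exp.comp continuous_neg).continuousAt.mul
      (continuousAt_rpow_const s _ (Or.inl (ne_of_gt hs)))).continuousWithinAt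
  exact (intervalIntegral.integral_hasDerivAt_right
    (intervalIntegrable_mul_rpow (by fun_prop) (by linarith) 0 x)
    (hcont.stronglyMeasurableAtFilter isOpen_Ioi x hx)
    (hcont.continuousAt (Ioi_mem_nhds hx))).const_sub (Gamma a)

lemma tendsto_upperIncompleteGamma_atTop {a : ℝ} (ha : 0 < a) :
    Tendsto (upperIncompleteGamma a) atTop (𝓝 0) := by
  unfold upperIncompleteGamma
  have h := intervalIntegral_tendsto_integral_Ioi 0 (GammaIntegral_convergent ha) tendsto_id
  rw [← Gamma_eq_integral ha] at h
  simpa using h.const_sub (Gamma a)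

lemma tendsto_exp_mul_upperIncompleteGamma_div_rpow {a : ℝ} (ha : 0 < a) :
    Tendsto (fun x => exp x * upperIncompleteGamma a x / x ^ (a - 1)) atTop (𝓝 1) := by
  set b := a - 1
  have hg : ∀ x > 0, HasDerivAt (fun x => exp (-x) * x ^ b)
      (-(exp (-x) * x ^ b) * (1 - b / x)) x := by
    intro x hx
    have he : HasDerivAt (fun x => exp (-x)) (-exp (-x)) x := by
      simpa using (hasDerivAt_neg x).exp
    refine (he.mul (hasDerivAt_rpow_const (Or.inl hx.ne'))).congr_deriv ?_
    rw [rpow_sub_one hx.ne' b]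
    ring
  have hratio : ∀ᶠ x in atTop,
      -(exp (-x) * x ^ b) / (-(exp (-x) * x ^ b) * (1 - b / x)) = (1 - b / x)⁻¹ := by
    filter_upwards [eventually_gt_atTop 0] with x hx
    exact div_mul_cancel_left₀ (neg_ne_zero.2 (by positivity)) _
  have hlim : Tendsto (fun x : ℝ => (1 - b / x)⁻¹) atTop (𝓝 1) := by
    simpa using (tendsto_const_nhds.sub (tendsto_const_nhds.div_atTop tendsto_id)).inv₀
      (by norm_num : (1:ℝ) - 0 ≠ 0)
  have hL := HasDerivAt.lhopital_zero_atTop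
    ((eventually_gt_atTop 0).mono fun x hx => hasDerivAt_upperIncompleteGamma ha hx)
    ((eventually_gt_atTop 0).mono hg)
    ((eventually_gt_atTop 0).and (eventually_gt_atTop b) |>.mono fun x ⟨hx, hbx⟩ =>
      mul_ne_zero (neg_ne_zero.2 (by positivity)) (sub_ne_zero.2 ((div_lt_one hx).2 hbx).ne'))
    (tendsto_upperIncompleteGamma_atTop ha)
    (by simpa [mul_comm] using tendsto_rpow_mul_exp_neg_mul_atTop_nhds_zero b 1 one_pos)
    (hlim.congr' (hratio.mono fun _ h => h.symm))
  refine hL.congr' ((eventually_gt_atTop 0).mono fun x hx => ?_)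
  rw [exp_neg]
  field_simp

section
variable {β : ℝ}

lemma one_sub_exp_neg_mul_rpow_le (hβ₁ : -1 < β) (hβ₀ : β ≤ 0) {x : ℝ} (hx : 0 ≤ x) :
    (1 - exp (-x)) * x ^ β ≤ exp (-x) * ∫ s in (0:ℝ)..x, exp s * s ^ β := by
  have hmono : (∫ s in (0:ℝ)..x, exp s * x ^ β) ≤ ∫ s in (0:ℝ)..x, exp s * s ^ β :=
    intervalIntegral.integral_mono_on_of_le_Ioo hx
      ((continuous_exp.mul continuous_const).intervalIntegrable _ _)
      (intervalIntegrable_mul_rpow continuous_exp hβ₁ 0 x) fun s hs =>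
        mul_le_mul_of_nonneg_left (rpow_le_rpow_of_nonpos hs.1 hs.2.le hβ₀) (exp_nonneg s)
  rw [intervalIntegral.integral_mul_const, integral_exp, exp_zero] at hmono
  calc (1 - exp (-x)) * x ^ β = exp (-x) * ((exp x - 1) * x ^ β) := by
        rw [exp_neg]; field_simp
    _ ≤ _ := by gcongr

lemma exp_neg_mul_integral_exp_mul_rpow_le (hβ₁ : -1 < β) (hβ₀ : β ≤ 0) {x y : ℝ} (hy : 0 < y)
    (hyx : y ≤ x) : exp (-x) * ∫ s in (0:ℝ)..x, exp s * s ^ β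
      ≤ exp (y - x) * x ^ (β + 1) / (β + 1) + y ^ β := by
  have hint := intervalIntegrable_mul_rpow continuous_exp hβ₁
  have hinit : (∫ s in (0:ℝ)..y, exp s * s ^ β) ≤ exp y * x ^ (β + 1) / (β + 1) :=
    calc (∫ s in (0:ℝ)..y, exp s * s ^ β) ≤ ∫ s in (0:ℝ)..y, exp y * s ^ β :=
          intervalIntegral.integral_mono_on hy.le (hint 0 y)
            ((intervalIntegral.intervalIntegrable_rpow' hβ₁).const_mul _) fun s hs =>
              mul_le_mul_of_nonneg_right (exp_le_exp.2 hs.2) (rpow_nonneg hs.1 β)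
      _ = exp y * y ^ (β + 1) / (β + 1) := by
          rw [intervalIntegral.integral_const_mul, integral_rpow (Or.inl hβ₁),
            zero_rpow (by linarith), sub_zero, mul_div_assoc]
      _ ≤ exp y * x ^ (β + 1) / (β + 1) := by
          gcongr <;> linarith
  have htail : (∫ s in y..x, exp s * s ^ β) ≤ exp x * y ^ β :=
    calc (∫ s in y..x, exp s * s ^ β) ≤ ∫ s in y..x, exp s * y ^ β :=
          intervalIntegral.integral_mono_on hyx (hint y x)
            ((continuous_exp.mul continuous_const).intervalIntegrable _ _) fun s hs =>
              mul_le_mul_of_nonneg_left (rpow_le_rpow_of_nonpos hy hs.1 hβ₀) (exp_nonneg s)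
      _ = (exp x - exp y) * y ^ β := by rw [intervalIntegral.integral_mul_const, integral_exp]
      _ ≤ exp x * y ^ β := by gcongr; linarith [exp_pos y]
  rw [← intervalIntegral.integral_add_adjacent_intervals (hint 0 y) (hint y x)]
  calc exp (-x) * ((∫ s in (0:ℝ)..y, exp s * s ^ β) + ∫ s in y..x, exp s * s ^ β)
      ≤ exp (-x) * (exp y * x ^ (β + 1) / (β + 1) + exp x * y ^ β) := by gcongr
    _ = exp (y - x) * x ^ (β + 1) / (β + 1) + y ^ β := by
      rw [sub_eq_add_neg, exp_add, exp_neg]; field_simp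

lemma tendsto_exp_neg_mul_integral_exp_mul_rpow_div_rpow (hβ₁ : -1 < β) (hβ₀ : β ≤ 0) :
    Tendsto (fun x => exp (-x) * (∫ s in (0:ℝ)..x, exp s * s ^ β) / x ^ β) atTop (𝓝 1) := by
  have hlower : Tendsto (fun x => 1 - exp (-x)) atTop (𝓝 1) := by
    simpa using tendsto_const_nhds.sub tendsto_exp_neg_atTop_nhds_zero
  have hsplit : Tendsto (fun x => x * exp (-√x)) atTop (𝓝 0) := by
    refine ((tendsto_pow_mul_exp_neg_atTop_nhds_zero 2).comp tendsto_sqrt_atTop).congr'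
      ((eventually_ge_atTop 0).mono fun x hx => ?_)
    simp [sq_sqrt hx]
  have hratio : Tendsto (fun x => ((x - √x) / x) ^ β) atTop (𝓝 1) := by
    have h : Tendsto (fun x => 1 - (√x)⁻¹) atTop (𝓝 1) := by
      simpa using tendsto_const_nhds.sub (tendsto_inv_atTop_zero.comp tendsto_sqrt_atTop)
    refine ((continuousAt_rpow_const 1 β (Or.inl one_ne_zero)).tendsto.comp
      (h.congr' ((eventually_gt_atTop 0).mono fun x hx => ?_))).trans_eq (by rw [one_rpow])
    rw [sub_div, div_self hx.ne', sqrt_div_self', one_div]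
  have hupper := (hsplit.div_const (β + 1)).add hratio
  rw [zero_div, zero_add] at hupper
  refine tendsto_of_tendsto_of_tendsto_of_le_of_le' hlower hupper
    ((eventually_ge_atTop 0).mono fun x hx => ?_) ((eventually_gt_atTop 1).mono fun x hx => ?_)
  · rcases hx.eq_or_lt with rfl | hx
    · simp
    rw [le_div_iff₀ (rpow_pos_of_pos hx β)]
    exact one_sub_exp_neg_mul_rpow_le hβ₁ hβ₀ hx.le
  · have hx₀ : 0 < x := by linarith
    have hy : 0 < x - √x := sub_pos.2 (sqrt_lt_self_iff.2 hx)
    rw [div_le_iff₀ (rpow_pos_of_pos hx₀ β)]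
    refine (exp_neg_mul_integral_exp_mul_rpow_le hβ₁ hβ₀ hy (by simp)).trans_eq ?_
    rw [div_rpow hy.le hx₀.le, rpow_add_one hx₀.ne', sub_sub_cancel_left]
    field_simp
end

lemma fH_eq_exp_neg_mul_Gamma_add {H : ℝ} (hH : 1 / 2 < H) {x : ℝ} (hx : 0 ≤ x) :
    fH H x = exp (-x) * Gamma (2 * H) + (2 * H - 1) *
      (exp (-x) * (∫ s in (0:ℝ)..x, exp s * s ^ (2 * H - 2))
        + exp x * upperIncompleteGamma (2 * H - 1) x) := by
  have hα : 0 < 2 * H - 1 := by linarith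
  have hP := integral_exp_mul_rpow_by_parts 1 hα hx
  have hT := upperIncompleteGamma_add_one hα hx
  simp only [one_mul, show 2 * H - 1 - 1 = 2 * H - 2 by ring] at hP
  rw [sub_add_cancel] at hT
  rw [fH, fH1, show fH2 H x = exp x * upperIncompleteGamma (2 * H) x from rfl, hT]
  linear_combination (-exp (-x)) * hP

theorem stmt_2 (H : ℝ) (hH : H ∈ Set.Ioo (1/2 : ℝ) 1) :
    Filter.Tendsto (fun x : ℝ => fH H x / (2 * (2 * H - 1) * x ^ (2 * H - 2)))
      Filter.atTop (nhds 1) := by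
  obtain ⟨hH₁, hH₂⟩ := hH
  have hA := tendsto_exp_neg_mul_integral_exp_mul_rpow_div_rpow (β := 2 * H - 2)
    (by linarith) (by linarith)
  have hB := tendsto_exp_mul_upperIncompleteGamma_div_rpow (a := 2 * H - 1) (by linarith)
  rw [show 2 * H - 1 - 1 = 2 * H - 2 by ring] at hB
  have hΓ : Tendsto (fun x => exp (-x) / x ^ (2 * H - 2)) atTop (𝓝 0) := by
    refine (tendsto_rpow_mul_exp_neg_mul_atTop_nhds_zero (-(2 * H - 2)) 1 one_pos).congr'
      ((eventually_ge_atTop 0).mono fun x hx => ?_)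
    simp only [rpow_neg hx, neg_one_mul, div_eq_inv_mul]
  have hlim := (hΓ.const_mul (Gamma (2 * H) / (2 * (2 * H - 1)))).add ((hA.add hB).div_const 2)
  rw [mul_zero, zero_add, one_add_one_eq_two, div_self two_ne_zero] at hlim
  refine hlim.congr' ((eventually_gt_atTop 0).mono fun x hx => ?_)
  have hα : 2 * H - 1 ≠ 0 := by linarith
  simp only [fH_eq_exp_neg_mul_Gamma_add hH₁ hx.le]
  field_simp
end

section
/- Let H ∈ (1/2, 1). Then f_H(x) − f_H(0) = f_H(x) − 2Γ(2H) = −x^{2H}/H + o(x^{2H}) as x → 0⁺; that is, (f_H(x) − 2Γ(2H) + x^{2H}/H)/x^{2H} → 0 as x → 0⁺. -/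
open MeasureTheory Real Filter Finset

/-!
The remainder `fH H x - 2Γ(2H) + x^{2H}/H` is exactly
`2 (Γ(2H) (cosh x - 1) - ∫₀ˣ (cosh (x - s) - 1) s^{2H-1} ds)`, because the two exponential
kernels of `fH1` and `fH2` combine into `2 cosh (x - s)` and `∫₀ˣ s^{2H-1} ds = x^{2H}/(2H)`.
Since `0 ≤ cosh u - 1 ≤ u²` for `|u| ≤ 1`, the first term is `O(x²)` and the integral is
`O(x^{2H+2})`; both are `o(x^{2H})` because `H < 1`.
-/

open Asymptotics Topology

theorem cosh_sub_one_le_sq {u : ℝ} (hu : |u| ≤ 1) : cosh u - 1 ≤ u ^ 2 := by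
  have hpos := (abs_le.1 (abs_exp_sub_one_sub_id_le hu)).2
  have hneg := (abs_le.1 (abs_exp_sub_one_sub_id_le (x := -u) (by rwa [abs_neg]))).2
  rw [cosh_eq]
  linarith

theorem isBigO_cosh_sub_one_sq : (fun u => cosh u - 1) =O[𝓝 0] fun u => u ^ 2 := by
  refine .of_bound 1 ?_
  filter_upwards [Icc_mem_nhds neg_one_lt_zero one_pos] with u hu
  rw [one_mul, norm_of_nonneg (sub_nonneg.2 (one_le_cosh u)), norm_of_nonneg (sq_nonneg u)]
  exact cosh_sub_one_le_sq (abs_le.2 hu)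

theorem abs_integral_cosh_sub_one_mul_rpow_le {r x : ℝ} (hr : -1 < r) (hx₀ : 0 ≤ x)
    (hx₁ : x ≤ 1) :
    |∫ s in (0:ℝ)..x, (cosh (x - s) - 1) * s ^ r| ≤ x ^ 2 * (x ^ (r + 1) / (r + 1)) := by
  have hpoint : ∀ s ∈ Set.Ioc 0 x, ‖(cosh (x - s) - 1) * s ^ r‖ ≤ x ^ 2 * s ^ r := by
    rintro s ⟨hs₀, hsx⟩
    have hxs : |x - s| ≤ 1 := abs_le.2 ⟨by linarith, by linarith⟩
    rw [norm_of_nonneg (mul_nonneg (sub_nonneg.2 (one_le_cosh _)) (rpow_nonneg hs₀.le r))]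
    gcongr
    calc cosh (x - s) - 1 ≤ (x - s) ^ 2 := cosh_sub_one_le_sq hxs
      _ ≤ x ^ 2 := by gcongr; linarith
  calc |∫ s in (0:ℝ)..x, (cosh (x - s) - 1) * s ^ r|
      ≤ ∫ s in (0:ℝ)..x, x ^ 2 * s ^ r :=
        intervalIntegral.norm_integral_le_of_norm_le hx₀ (ae_of_all _ hpoint)
          ((intervalIntegral.intervalIntegrable_rpow' hr).const_mul _)
    _ = x ^ 2 * (x ^ (r + 1) / (r + 1)) := by
        rw [intervalIntegral.integral_const_mul, integral_rpow (Or.inl hr),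
          zero_rpow (by linarith), sub_zero]

theorem isBigO_integral_cosh_sub_one_mul_rpow {r : ℝ} (hr : -1 < r) :
    (fun x => ∫ s in (0:ℝ)..x, (cosh (x - s) - 1) * s ^ r) =O[𝓝[>] 0]
      fun x => x ^ (r + 3) := by
  refine .of_bound (r + 1)⁻¹ ?_
  filter_upwards [Ioo_mem_nhdsGT one_pos] with x ⟨hx₀, hx₁⟩
  calc ‖∫ s in (0:ℝ)..x, (cosh (x - s) - 1) * s ^ r‖
      ≤ x ^ 2 * (x ^ (r + 1) / (r + 1)) :=
        abs_integral_cosh_sub_one_mul_rpow_le hr hx₀.le hx₁.le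
    _ = (r + 1)⁻¹ * ‖x ^ (r + 3)‖ := by
        rw [norm_of_nonneg (rpow_nonneg hx₀.le _), show r + 3 = 2 + (r + 1) by ring,
          rpow_add hx₀ 2 (r + 1), rpow_two]
        ring

theorem isLittleO_rpow_rpow_nhdsGT_zero {a b : ℝ} (hab : a < b) :
    (fun x : ℝ => x ^ b) =o[𝓝[>] 0] fun x => x ^ a := by
  refine isLittleO_of_tendsto' ?_ ?_
  · filter_upwards [self_mem_nhdsWithin] with x hx hxa
    exact absurd hxa (rpow_pos_of_pos hx a).ne'
  · have hc : Tendsto (fun x : ℝ => x ^ (b - a)) (𝓝[>] 0) (𝓝 0) := by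
      simpa [zero_rpow (sub_pos.2 hab).ne'] using
        ((continuousAt_rpow_const 0 (b - a) (Or.inr (sub_pos.2 hab).le)).tendsto).mono_left
          nhdsWithin_le_nhds
    refine hc.congr' ?_
    filter_upwards [self_mem_nhdsWithin] with x hx
    rw [rpow_sub hx]

theorem fH_zero (H : ℝ) : fH H 0 = 2 * Gamma (2 * H) := by
  simp only [fH, fH1, fH2, neg_zero, exp_zero, intervalIntegral.integral_same, sub_zero, one_mul]
  ring

theorem fH_sub_two_mul_Gamma_add_rpow_div_eq {H : ℝ} (hH : 0 < H) (x : ℝ) :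
    fH H x - 2 * Gamma (2 * H) + x ^ (2 * H) / H =
      2 * (Gamma (2 * H) * (cosh x - 1) -
        ∫ s in (0:ℝ)..x, (cosh (x - s) - 1) * s ^ (2 * H - 1)) := by
  have hr : -1 < 2 * H - 1 := by linarith
  have hpow : IntervalIntegrable (fun s : ℝ => s ^ (2 * H - 1)) volume 0 x :=
    intervalIntegral.intervalIntegrable_rpow' hr
  have hcosh : 2 * ∫ s in (0:ℝ)..x, cosh (x - s) * s ^ (2 * H - 1) =
      exp (-x) * (∫ s in (0:ℝ)..x, exp s * s ^ (2 * H - 1)) +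
        exp x * ∫ s in (0:ℝ)..x, exp (-s) * s ^ (2 * H - 1) := by
    rw [← intervalIntegral.integral_const_mul, ← intervalIntegral.integral_const_mul,
      ← intervalIntegral.integral_const_mul, ← intervalIntegral.integral_add
        ((hpow.continuousOn_mul (g := exp) (by fun_prop)).const_mul _)
        ((hpow.continuousOn_mul (g := fun s => exp (-s)) (by fun_prop)).const_mul _)]
    refine intervalIntegral.integral_congr fun s _ => ?_
    simp only [cosh_eq, sub_eq_add_neg, neg_add, neg_neg, exp_add]
    ring
  have hkernel : ∫ s in (0:ℝ)..x, (cosh (x - s) - 1) * s ^ (2 * H - 1) =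
      (∫ s in (0:ℝ)..x, cosh (x - s) * s ^ (2 * H - 1)) - x ^ (2 * H) / (2 * H) := by
    simp_rw [sub_mul, one_mul]
    rw [intervalIntegral.integral_sub (hpow.continuousOn_mul (by fun_prop)) hpow,
      integral_rpow (Or.inl hr), sub_add_cancel, zero_rpow (by positivity), sub_zero]
  rw [hkernel, fH, fH1, fH2, cosh_eq]
  linear_combination hcosh

theorem stmt_3 (H : ℝ) (hH : H ∈ Set.Ioo (1/2 : ℝ) 1) :
    fH H 0 = 2 * Real.Gamma (2 * H) ∧
    Filter.Tendsto
      (fun x : ℝ => (fH H x - 2 * Real.Gamma (2 * H) + x ^ (2 * H) / H) / x ^ (2 * H))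
      (nhdsWithin 0 (Set.Ioi 0)) (nhds 0) := by
  have hH₀ : 0 < H := by linarith [hH.1]
  have hGamma : (fun x => Gamma (2 * H) * (cosh x - 1)) =o[𝓝[>] 0] fun x => x ^ (2 * H) := by
    refine ((isBigO_cosh_sub_one_sq.mono nhdsWithin_le_nhds).const_mul_left _).trans_isLittleO ?_
    simpa only [rpow_two] using isLittleO_rpow_rpow_nhdsGT_zero (by linarith [hH.2] : 2 * H < 2)
  have hIntegral : (fun x => ∫ s in (0:ℝ)..x, (cosh (x - s) - 1) * s ^ (2 * H - 1)) =o[𝓝[>] 0]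
      fun x => x ^ (2 * H) :=
    (isBigO_integral_cosh_sub_one_mul_rpow (by linarith)).trans_isLittleO
      (isLittleO_rpow_rpow_nhdsGT_zero (by linarith))
  refine ⟨fH_zero H, IsLittleO.tendsto_div_nhds_zero ?_⟩
  simp_rw [fH_sub_two_mul_Gamma_add_rpow_div_eq hH₀]
  exact (hGamma.sub hIntegral).const_mul_left 2
end

section
/- Let H ∈ (1/2, 1) and λ > 0. Then the series ∑_{n=1}^{∞} f_H(λ n) diverges to +∞. (Consequently, since the auto-covariance of a fractional Ornstein–Uhlenbeck process FOU(λ,σ,H) equals σ²H f_H(λ|t|)/(2λ^{2H}), any such process with H > 1/2 has long memory.) -/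
open MeasureTheory Real Filter Finset

/-! Since `s ↦ s ^ (2H-1)` is concave, it lies below its tangent line at `x`; integrating against
`e^s` bounds the integral in `f_H^{(1)}(x)` from above, while
`f_H^{(2)}(x) = e^x ∫_x^∞ e^{-s} s^(2H-1) ds ≥ x^(2H-1)`. In the sum the terms of order `x^(2H-1)`
cancel, leaving `f_H(x) ≥ (2H-1) x^(2H-2) (1 - (x+1) e^{-x})`. This is nonnegative and eventually at
least half of `(2H-1) x^(2H-2)`, and `∑ n^(2H-2)` diverges because `2H - 2 > -1`. -/

namespace Real

theorem rpow_le_rpow_add_mul_sub {p x s : ℝ} (hp₀ : 0 ≤ p) (hp₁ : p ≤ 1) (hx : 0 < x)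
    (hs : 0 ≤ s) : s ^ p ≤ x ^ p + p * x ^ (p - 1) * (s - x) := by
  have hbern := rpow_one_add_le_one_add_mul_self (s := s / x - 1)
    (by linarith [div_nonneg hs hx.le]) hp₀ hp₁
  rw [add_sub_cancel, div_rpow hs hx.le, div_le_iff₀ (rpow_pos_of_pos hx p)] at hbern
  refine hbern.trans_eq ?_
  rw [rpow_sub_one hx.ne']
  field_simp

theorem integral_exp_mul_add_mul_sub (A B x : ℝ) :
    ∫ s in (0:ℝ)..x, exp s * (A + B * (s - x)) = exp x * (A - B) - (A - B * (x + 1)) := by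
  have hderiv : ∀ s ∈ Set.uIcc (0:ℝ) x,
      HasDerivAt (fun s => exp s * (A + B * (s - x) - B)) (exp s * (A + B * (s - x))) s := by
    intro s _
    have h := (hasDerivAt_exp s).mul
      ((((hasDerivAt_id' s).sub_const x).const_mul B).const_add A |>.sub_const B)
    exact h.congr_deriv (by ring)
  rw [intervalIntegral.integral_eq_sub_of_hasDerivAt hderiv
    (Continuous.intervalIntegrable (by fun_prop) _ _)]
  simp only [sub_self, mul_zero, add_zero, exp_zero, zero_sub, mul_neg, one_mul, sub_right_inj]
  ring

theorem integral_exp_mul_rpow_le {p x : ℝ} (hp₀ : 0 ≤ p) (hp₁ : p ≤ 1) (hx : 0 < x) :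
    ∫ s in (0:ℝ)..x, exp s * s ^ p
      ≤ exp x * (x ^ p - p * x ^ (p - 1)) - (x ^ p - p * x ^ (p - 1) * (x + 1)) := by
  rw [← integral_exp_mul_add_mul_sub]
  refine intervalIntegral.integral_mono_on hx.le ?_ ?_ fun s hs => ?_
  · exact Continuous.intervalIntegrable (by fun_prop) _ _
  · exact Continuous.intervalIntegrable (by fun_prop) _ _
  · exact mul_le_mul_of_nonneg_left (rpow_le_rpow_add_mul_sub hp₀ hp₁ hx hs.1) (exp_pos s).le

theorem Gamma_sub_integral_eq_setIntegral_Ioi {s x : ℝ} (hs : 0 < s) (hx : 0 ≤ x) :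
    Gamma s - ∫ t in (0:ℝ)..x, exp (-t) * t ^ (s - 1)
      = ∫ t in Set.Ioi x, exp (-t) * t ^ (s - 1) := by
  have hint := GammaIntegral_convergent hs
  rw [intervalIntegral.integral_of_le hx, Gamma_eq_integral hs, ← Set.Ioc_union_Ioi_eq_Ioi hx,
    setIntegral_union (Set.Ioc_disjoint_Ioi le_rfl) measurableSet_Ioi
      (hint.mono_set Set.Ioc_subset_Ioi_self) (hint.mono_set (Set.Ioi_subset_Ioi hx))]
  ring

theorem rpow_mul_exp_neg_le_setIntegral_Ioi {s x : ℝ} (hs : 1 ≤ s) (hx : 0 ≤ x) :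
    x ^ (s - 1) * exp (-x) ≤ ∫ t in Set.Ioi x, exp (-t) * t ^ (s - 1) := by
  rw [← integral_exp_neg_Ioi, ← integral_const_mul]
  refine setIntegral_mono_on ((integrableOn_exp_neg_Ioi x).const_mul _)
    ((GammaIntegral_convergent (by linarith)).mono_set (Set.Ioi_subset_Ioi hx)) measurableSet_Ioi
    fun t ht => ?_
  rw [mul_comm]
  exact mul_le_mul_of_nonneg_left (rpow_le_rpow hx ht.le (by linarith)) (exp_pos _).le

theorem tendsto_add_one_mul_exp_neg_atTop :
    Tendsto (fun x => (x + 1) * exp (-x)) atTop (nhds 0) := by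
  have h := (tendsto_pow_mul_exp_neg_atTop_nhds_zero 1).add tendsto_exp_neg_atTop_nhds_zero
  simpa [add_mul] using h

end Real

theorem rpow_le_fH2 {H x : ℝ} (hH : 1 / 2 ≤ H) (hx : 0 ≤ x) : x ^ (2 * H - 1) ≤ fH2 H x := by
  have h := Real.rpow_mul_exp_neg_le_setIntegral_Ioi (s := 2 * H) (by linarith) hx
  rw [fH2, Real.Gamma_sub_integral_eq_setIntegral_Ioi (by linarith) hx]
  calc x ^ (2 * H - 1) = exp x * (x ^ (2 * H - 1) * exp (-x)) := by
        rw [exp_neg]; field_simp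
    _ ≤ _ := mul_le_mul_of_nonneg_left h (exp_pos x).le

theorem mul_rpow_mul_one_sub_le_fH {H x : ℝ} (hH₀ : 1 / 2 ≤ H) (hH₁ : H ≤ 1) (hx : 0 < x) :
    (2 * H - 1) * x ^ (2 * H - 2) * (1 - (x + 1) * exp (-x)) ≤ fH H x := by
  set P := x ^ (2 * H - 1)
  set Q := (2 * H - 1) * x ^ (2 * H - 2)
  have hint : ∫ s in (0:ℝ)..x, exp s * s ^ (2 * H - 1)
      ≤ exp x * (P - Q) - (P - Q * (x + 1)) := by
    have h := Real.integral_exp_mul_rpow_le (p := 2 * H - 1) (by linarith) (by linarith) hx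
    rwa [show 2 * H - 1 - 1 = 2 * H - 2 by ring] at h
  have hfH1 : exp (-x) * (Gamma (2 * H) - (exp x * (P - Q) - (P - Q * (x + 1)))) ≤ fH1 H x :=
    mul_le_mul_of_nonneg_left (by linarith) (exp_pos _).le
  have hfH2 : P ≤ fH2 H x := rpow_le_fH2 hH₀ hx.le
  have hexp : exp (-x) * exp x = 1 := by rw [← exp_add, neg_add_cancel, exp_zero]
  have hΓ : 0 ≤ exp (-x) * Gamma (2 * H) :=
    mul_nonneg (exp_pos _).le (Gamma_pos_of_pos (by linarith)).le
  have hP : 0 ≤ exp (-x) * P := mul_nonneg (exp_pos _).le (rpow_nonneg hx.le _)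
  rw [fH]
  linear_combination hfH1 + hfH2 + hΓ + hP + (P - Q) * hexp

theorem fH_nonneg {H x : ℝ} (hH₀ : 1 / 2 ≤ H) (hH₁ : H ≤ 1) (hx : 0 < x) : 0 ≤ fH H x := by
  have hexp : (x + 1) * exp (-x) ≤ 1 := by
    rw [exp_neg, ← div_eq_mul_inv, div_le_one (exp_pos x)]
    exact add_one_le_exp x
  refine le_trans ?_ (mul_rpow_mul_one_sub_le_fH hH₀ hH₁ hx)
  have ha : 0 ≤ 2 * H - 1 := by linarith
  have hxa := rpow_nonneg hx.le (2 * H - 2)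
  have hsmall : 0 ≤ 1 - (x + 1) * exp (-x) := by linarith
  positivity

theorem not_summable_fH_mul_nat_add_one {H l : ℝ} (hH₀ : 1 / 2 < H) (hH₁ : H ≤ 1) (hl : 0 < l) :
    ¬ Summable fun k : ℕ => fH H (l * (k + 1)) := by
  intro hsum
  set c := (2 * H - 1) / 2 * l ^ (2 * H - 2)
  have hc : 0 < c := mul_pos (by linarith) (rpow_pos_of_pos hl _)
  have hlk : Tendsto (fun k : ℕ => l * ((k : ℝ) + 1)) atTop atTop :=
    (tendsto_atTop_add_const_right _ 1 tendsto_natCast_atTop_atTop).const_mul_atTop hl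
  have hsmall : ∀ᶠ k : ℕ in atTop, (l * (k + 1) + 1) * exp (-(l * (k + 1))) ≤ 1 / 2 :=
    (Real.tendsto_add_one_mul_exp_neg_atTop.comp hlk).eventually (ge_mem_nhds (by norm_num))
  have hbound : ∀ᶠ k : ℕ in atTop, ‖c * ((k : ℝ) + 1) ^ (2 * H - 2)‖ ≤ fH H (l * (k + 1)) := by
    filter_upwards [hsmall] with k hk
    have hx : 0 < l * ((k : ℝ) + 1) := by positivity
    rw [Real.norm_of_nonneg (by positivity)]
    calc c * ((k : ℝ) + 1) ^ (2 * H - 2)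
        = (2 * H - 1) * (l * (k + 1)) ^ (2 * H - 2) * (1 / 2) := by
          rw [mul_rpow hl.le (by positivity)]; ring
      _ ≤ (2 * H - 1) * (l * (k + 1)) ^ (2 * H - 2)
          * (1 - (l * (k + 1) + 1) * exp (-(l * (k + 1)))) := by
          have ha : 0 ≤ 2 * H - 1 := by linarith
          gcongr
          linarith
      _ ≤ fH H (l * (k + 1)) := mul_rpow_mul_one_sub_le_fH hH₀.le hH₁ hx
  have hpow := (summable_mul_left_iff hc.ne').mp (hsum.of_norm_bounded_eventually_nat hbound)
  have hlt := Real.summable_nat_rpow.mp ((summable_nat_add_iff 1).mp (by exact_mod_cast hpow))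
  linarith

theorem stmt_6 (H l : ℝ) (hH : H ∈ Set.Ioo (1/2 : ℝ) 1) (hl : 0 < l) :
    Filter.Tendsto (fun N : ℕ => ∑ n ∈ Finset.Icc 1 N, fH H (l * n))
      Filter.atTop Filter.atTop := by
  obtain ⟨hH₀, hH₁⟩ := hH
  have hnonneg (k : ℕ) : 0 ≤ fH H (l * (k + 1)) := fH_nonneg hH₀.le hH₁.le (by positivity)
  refine ((not_summable_iff_tendsto_nat_atTop_of_nonneg hnonneg).mp
    (not_summable_fH_mul_nat_add_one hH₀ hH₁.le hl)).congr fun N => ?_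
  rw [← Finset.Ico_add_one_right_eq_Icc, Finset.sum_Ico_eq_sum_range]
  simp [add_comm]
end

section
/- Let λ_1, λ_2, …, λ_p be pairwise distinct positive real numbers and set K_i := λ_i^{p−1} / ∏_{j≠i} (λ_i − λ_j). Then for every i = 1, …, p, K_i + 2λ_i ∑_{j≠i} K_j/(λ_i + λ_j) = λ_i^{p−1} / ∏_{j≠i} (λ_i + λ_j). -/
open Finset Polynomial

/-! Lagrange interpolation of `x ^ (p - 1)` at the nodes `λ_j`, in barycentric form and evaluated
at the non-node `x = -λ_i`, is the partial fraction expansion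
`∑_j K_j / (λ_i + λ_j) = λ_i ^ (p - 1) / ∏_j (λ_i + λ_j)`; the claim is this identity with the
term `j = i`, where `λ_i + λ_i = 2 λ_i`, split off. -/

variable {F ι : Type*} [Field F] [DecidableEq ι] {s : Finset ι} {v : ι → F}

theorem Lagrange.eval_eq_eval_nodal_mul_sum_nodalWeight {f : F[X]} (hvs : Set.InjOn v s)
    (hf : f.degree < #s) {x : F} (hx : ∀ i ∈ s, x ≠ v i) :
    f.eval x = (nodal s v).eval x * ∑ i ∈ s, nodalWeight s v i * (x - v i)⁻¹ * f.eval (v i) := by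
  conv_lhs => rw [eq_interpolate hvs hf]
  exact eval_interpolate_not_at_node _ hx

theorem sum_pow_div_prod_sub_mul_add (hvs : Set.InjOn v s) (hs : s.Nonempty) {y : F}
    (hy : ∀ j ∈ s, y + v j ≠ 0) :
    ∑ j ∈ s, v j ^ (#s - 1) / ((∏ k ∈ s.erase j, (v j - v k)) * (y + v j)) =
      y ^ (#s - 1) / ∏ k ∈ s, (y + v k) := by
  obtain ⟨n, hn⟩ : ∃ n, #s = n + 1 := Nat.exists_eq_add_one.mpr hs.card_pos
  have hdeg : (X ^ n : F[X]).degree < #s := by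
    rw [degree_X_pow, hn]; exact_mod_cast n.lt_succ_self
  have hx : ∀ j ∈ s, -y ≠ v j := fun j hj h => hy j hj (by rw [← h]; ring)
  have key := Lagrange.eval_eq_eval_nodal_mul_sum_nodalWeight hvs hdeg hx
  simp only [eval_pow, eval_X, Lagrange.eval_nodal, Lagrange.nodalWeight,
    show ∀ k, -y - v k = -(y + v k) from fun k => by ring, prod_neg, hn, pow_succ, neg_pow y] at key
  rw [hn, Nat.add_sub_cancel, eq_div_iff (prod_ne_zero_iff.mpr hy), sum_mul]
  -- both `(-y) ^ n` and the nodal polynomial at `-y` carry the sign `(-1) ^ n`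
  refine mul_left_cancel₀ (pow_ne_zero n (neg_ne_zero.mpr one_ne_zero)) (key.trans ?_).symm
  rw [mul_sum, mul_sum]
  refine sum_congr rfl fun j hj => ?_
  rw [← mul_prod_erase s _ hj, prod_inv_distrib]
  have hprod := prod_ne_zero_iff.mpr fun k hk => sub_ne_zero.mpr fun h =>
    (mem_erase.mp hk).1 (hvs (mem_of_mem_erase hk) hj h.symm)
  field_simp [hy j hj]

theorem stmt_7 (p : ℕ) (lam : Fin p → ℝ) (hpos : ∀ i, 0 < lam i)
    (hinj : Function.Injective lam) (K : Fin p → ℝ)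
    (hK : ∀ i, K i = lam i ^ (p - 1) / ∏ j ∈ Finset.univ.erase i, (lam i - lam j))
    (i : Fin p) :
    K i + 2 * lam i * ∑ j ∈ Finset.univ.erase i, K j / (lam i + lam j) =
      lam i ^ (p - 1) / ∏ j ∈ Finset.univ.erase i, (lam i + lam j) := by
  have hadd : ∀ j, lam i + lam j ≠ 0 := fun j => (add_pos (hpos i) (hpos j)).ne'
  have key := sum_pow_div_prod_sub_mul_add hinj.injOn ⟨i, mem_univ i⟩ fun j _ => hadd j
  simp only [card_univ, Fintype.card_fin, ← div_div, ← hK] at key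
  rw [← add_sum_erase _ _ (mem_univ i), ← mul_prod_erase _ _ (mem_univ i)] at key
  have hprod : ∏ j ∈ univ.erase i, (lam i + lam j) ≠ 0 := prod_ne_zero_iff.mpr fun j _ => hadd j
  have hli := (hpos i).ne'
  field_simp at key ⊢
  linear_combination key
end

section
/- Let H ∈ (1/2, 1), λ > 0 and t ≥ 0. Then (2H−1) ∫_0^{∞} ∫_0^{∞} e^{−λ(w + z)} |z − w − t|^{2H−2} dz dw = f_H(λ t)/(2 λ^{2H}). (This is the deterministic identity behind the auto-covariance E(X_0 X_t) = σ²H f_H(λ|t|)/(2λ^{2H}) of a fractional Ornstein–Uhlenbeck process FOU(λ,σ,H).) -/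
/-!
Rescaling `w` and `z` by `λ` reduces the identity to `λ = 1`. With `α = 2H - 1` and `a = w + t`,
splitting the inner integral at `z = a` gives `e^{-a} (∫₀^a e^r r^{α-1} dr + Γ(α))`. The outer
integral of `e^{-2a}` against this primitive is done by parts, which leaves the upper incomplete
Gamma integral `∫_t^∞ e^{-u} u^{α-1} du = Γ(α) - ∫₀^t e^{-u} u^{α-1} du`. Integrating by parts
inside `f_H` as well (`Γ(2H) = α Γ(α)`) brings it to the same form.
-/

open MeasureTheory Real Filter Finset

open Set Topology

lemma intervalIntegrable_exp_mul_rpow (c : ℝ) {β : ℝ} (hβ : -1 < β) (a b : ℝ) :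
    IntervalIntegrable (fun r => exp (c * r) * r ^ β) volume a b :=
  (intervalIntegral.intervalIntegrable_rpow' hβ).continuousOn_mul (by fun_prop)

lemma setIntegral_Ioi_comp_add_right (F : ℝ → ℝ) (t : ℝ) :
    ∫ w in Ioi 0, F (w + t) = ∫ u in Ioi t, F u := by
  simpa [preimage_add_const_Ioi] using
    (measurePreserving_add_right volume t).setIntegral_preimage_emb
      (measurableEmbedding_addRight t) F (Ioi t)

lemma integrableOn_Ioi_comp_add_right_iff (F : ℝ → ℝ) (t : ℝ) :
    IntegrableOn (fun w => F (w + t)) (Ioi 0) ↔ IntegrableOn F (Ioi t) := by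
  have h := ((measurePreserving_add_right volume t).restrict_preimage_emb
    (measurableEmbedding_addRight t) (Ioi t)).integrable_comp_emb
    (measurableEmbedding_addRight t) (g := F)
  rwa [preimage_add_const_Ioi, sub_self] at h

lemma integral_Ioi_exp_neg_mul_abs_sub_rpow {α a : ℝ} (hα : 0 < α) (ha : 0 ≤ a) :
    ∫ z in Ioi 0, exp (-z) * |z - a| ^ (α - 1)
      = exp (-a) * ((∫ r in 0..a, exp r * r ^ (α - 1)) + Gamma α) := by
  set f : ℝ → ℝ := fun z => exp (-z) * |z - a| ^ (α - 1)
  have hreflect : ∀ r ∈ uIcc 0 a, f (a - r) = exp (-a) * (exp r * r ^ (α - 1)) := by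
    intro r hr
    rw [uIcc_of_le ha] at hr
    simp only [f, sub_sub_cancel_left, abs_neg, abs_of_nonneg hr.1, ← mul_assoc, ← exp_add]
    ring_nf
  have htranslate : ∀ u ∈ Ioi (0 : ℝ), f (u + a) = exp (-a) * (exp (-u) * u ^ (α - 1)) := by
    intro u hu
    simp only [f, add_sub_cancel_right, abs_of_pos (mem_Ioi.mp hu), ← mul_assoc, ← exp_add]
    ring_nf
  have hleft : IntervalIntegrable f volume 0 a := by
    have h : IntervalIntegrable (fun r => f (a - r)) volume 0 a :=
      (((intervalIntegral.intervalIntegrable_rpow' (by linarith)).continuousOn_mul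
        continuous_exp.continuousOn).const_mul (exp (-a))).congr
        fun r hr => (hreflect r (uIoc_subset_uIcc hr)).symm
    simpa using (h.comp_sub_left a).symm
  have hright : IntegrableOn f (Ioi a) := by
    rw [← integrableOn_Ioi_comp_add_right_iff]
    exact IntegrableOn.congr_fun ((GammaIntegral_convergent hα).const_mul (exp (-a)))
      (fun u hu => (htranslate u hu).symm) measurableSet_Ioi
  have hreflected : ∫ z in 0..a, f z = ∫ r in 0..a, f (a - r) := by
    simp [intervalIntegral.integral_comp_sub_left f a]
  rw [← intervalIntegral.integral_interval_add_Ioi' hleft hright, hreflected,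
    intervalIntegral.integral_congr hreflect, intervalIntegral.integral_const_mul,
    ← setIntegral_Ioi_comp_add_right, setIntegral_congr_fun measurableSet_Ioi htranslate,
    integral_const_mul, ← Gamma_eq_integral hα, mul_add]

lemma integral_exp_mul_rpow_le {α a : ℝ} (hα : 0 < α) (ha : 0 ≤ a) :
    ∫ r in 0..a, exp r * r ^ (α - 1) ≤ exp a * (a ^ α / α) :=
  calc ∫ r in 0..a, exp r * r ^ (α - 1)
      ≤ ∫ r in 0..a, exp a * r ^ (α - 1) := by
        refine intervalIntegral.integral_mono_on ha
          (by simpa using intervalIntegrable_exp_mul_rpow 1 (by linarith) 0 a)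
          ((intervalIntegral.intervalIntegrable_rpow' (by linarith)).const_mul _) fun r hr => ?_
        gcongr
        · exact rpow_nonneg hr.1 _
        · exact hr.2
    _ = exp a * (a ^ α / α) := by
        rw [intervalIntegral.integral_const_mul, integral_rpow (Or.inl (by linarith)),
          sub_add_cancel, zero_rpow hα.ne']
        ring

lemma continuous_integral_exp_mul_rpow {α : ℝ} (hα : 0 < α) :
    Continuous fun a => ∫ r in 0..a, exp r * r ^ (α - 1) :=
  intervalIntegral.continuous_primitive
    (fun a b => by simpa using intervalIntegrable_exp_mul_rpow 1 (by linarith) a b) 0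

lemma hasDerivAt_integral_exp_mul_rpow {α a : ℝ} (hα : 0 < α) (ha : 0 < a) :
    HasDerivAt (fun b => ∫ r in 0..b, exp r * r ^ (α - 1)) (exp a * a ^ (α - 1)) a := by
  have hcont : ∀ b ∈ Ioi (0 : ℝ), ContinuousAt (fun r => exp r * r ^ (α - 1)) b := fun b hb =>
    continuous_exp.continuousAt.mul (continuousAt_rpow_const b _ (Or.inl (ne_of_gt hb)))
  exact intervalIntegral.integral_hasDerivAt_right
    (by simpa using intervalIntegrable_exp_mul_rpow 1 (by linarith) 0 a)
    (ContinuousAt.stronglyMeasurableAtFilter isOpen_Ioi hcont a ha) (hcont a ha)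

lemma norm_exp_neg_two_mul_mul_integral_exp_mul_rpow_le {α a : ℝ} (hα : 0 < α) (ha : 0 ≤ a) :
    ‖exp (-(2 * a)) * ∫ r in 0..a, exp r * r ^ (α - 1)‖ ≤ α⁻¹ * (a ^ α * exp (-a)) := by
  have hnonneg : 0 ≤ ∫ r in 0..a, exp r * r ^ (α - 1) :=
    intervalIntegral.integral_nonneg ha fun r hr => mul_nonneg (exp_nonneg _) (rpow_nonneg hr.1 _)
  rw [norm_of_nonneg (by positivity)]
  calc exp (-(2 * a)) * ∫ r in 0..a, exp r * r ^ (α - 1)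
      ≤ exp (-(2 * a)) * (exp a * (a ^ α / α)) := by
        gcongr; exact integral_exp_mul_rpow_le hα ha
    _ = α⁻¹ * (a ^ α * exp (-a)) := by
        rw [div_eq_mul_inv, ← mul_assoc, ← mul_assoc, ← exp_add]; ring_nf

lemma integrableOn_exp_neg_two_mul_mul_integral_exp_mul_rpow {α x : ℝ} (hα : 0 < α)
    (hx : 0 ≤ x) :
    IntegrableOn (fun a => exp (-(2 * a)) * ∫ r in 0..a, exp r * r ^ (α - 1)) (Ioi x) := by
  have hdom : IntegrableOn (fun a => α⁻¹ * (a ^ α * exp (-a))) (Ioi x) := by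
    refine (IntegrableOn.mono_set ?_ (Ioi_subset_Ioi hx)).const_mul _
    simpa [mul_comm] using GammaIntegral_convergent (by linarith : 0 < α + 1)
  refine hdom.mono' ?_ ((ae_restrict_iff' measurableSet_Ioi).mpr <| ae_of_all _ fun a ha =>
    norm_exp_neg_two_mul_mul_integral_exp_mul_rpow_le hα (hx.trans ha.le))
  exact ((by fun_prop : Continuous fun a : ℝ => exp (-(2 * a))).mul
    (continuous_integral_exp_mul_rpow hα)).aestronglyMeasurable

lemma tendsto_exp_neg_two_mul_mul_integral_exp_mul_rpow {α : ℝ} (hα : 0 < α) :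
    Tendsto (fun a => exp (-(2 * a)) * ∫ r in 0..a, exp r * r ^ (α - 1)) atTop (𝓝 0) := by
  refine squeeze_zero_norm' ?_ (by simpa using
    (tendsto_rpow_mul_exp_neg_mul_atTop_nhds_zero α 1 one_pos).const_mul α⁻¹)
  filter_upwards [eventually_ge_atTop 0] with a ha using
    norm_exp_neg_two_mul_mul_integral_exp_mul_rpow_le hα ha

lemma integral_Ioi_exp_neg_two_mul_mul_integral_exp_mul_rpow {α x : ℝ} (C : ℝ) (hα : 0 < α)
    (hx : 0 ≤ x) :
    ∫ a in Ioi x, exp (-(2 * a)) * ((∫ r in 0..a, exp r * r ^ (α - 1)) + C)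
      = (exp (-(2 * x)) * ((∫ r in 0..x, exp r * r ^ (α - 1)) + C)
          + ∫ a in Ioi x, exp (-a) * a ^ (α - 1)) / 2 := by
  set P : ℝ → ℝ := fun a => ∫ r in 0..a, exp r * r ^ (α - 1)
  have hu : ∀ a ∈ Ioi x, HasDerivAt (fun a => P a + C) (exp a * a ^ (α - 1)) a := fun a ha =>
    (hasDerivAt_integral_exp_mul_rpow hα (hx.trans_lt ha)).add_const C
  have hv : ∀ a ∈ Ioi x, HasDerivAt (fun a => -exp (-(2 * a)) / 2) (exp (-(2 * a))) a :=
    fun a _ => by simpa using (((hasDerivAt_id a).const_mul 2).neg.exp.neg).div_const 2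
  have hexp_lim : Tendsto (fun a => exp (-(2 * a))) atTop (𝓝 0) :=
    tendsto_exp_neg_atTop_nhds_zero.comp (tendsto_id.const_mul_atTop two_pos)
  have hexp_int : IntegrableOn (fun a => exp (-(2 * a))) (Ioi x) := by
    simpa using exp_neg_integrableOn_Ioi x two_pos
  have huv'_int : IntegrableOn (fun a => (P a + C) * exp (-(2 * a))) (Ioi x) :=
    ((integrableOn_exp_neg_two_mul_mul_integral_exp_mul_rpow hα hx).add
      (hexp_int.const_mul C)).congr_fun (fun a _ => by simp only [Pi.add_apply, P]; ring)
      measurableSet_Ioi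
  have hu'v_eq : ∀ a ∈ Ioi x, exp a * a ^ (α - 1) * (-exp (-(2 * a)) / 2)
      = -2⁻¹ * (exp (-a) * a ^ (α - 1)) := fun a _ => by
    rw [show -a = a + -(2 * a) by ring, exp_add]; ring
  have hu'v_int : IntegrableOn (fun a => exp a * a ^ (α - 1) * (-exp (-(2 * a)) / 2)) (Ioi x) :=
    IntegrableOn.congr_fun
      (((GammaIntegral_convergent hα).mono_set (Ioi_subset_Ioi hx)).const_mul _)
      (fun a ha => (hu'v_eq a ha).symm) measurableSet_Ioi
  have huv_lim : Tendsto (fun a => (P a + C) * (-exp (-(2 * a)) / 2)) atTop (𝓝 0) := by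
    have h := ((tendsto_exp_neg_two_mul_mul_integral_exp_mul_rpow hα).add
      (hexp_lim.const_mul C)).neg.div_const 2
    rw [mul_zero, add_zero, neg_zero, zero_div] at h
    exact h.congr fun a => by ring
  have h := integral_Ioi_mul_deriv_eq_deriv_mul hu hv huv'_int hu'v_int
    (((continuous_integral_exp_mul_rpow hα).add continuous_const).mul
      (by fun_prop)).continuousWithinAt huv_lim
  simp only [Pi.mul_apply, Pi.add_apply] at h
  simp_rw [mul_comm (exp (-(2 * _)))]
  rw [h, setIntegral_congr_fun measurableSet_Ioi hu'v_eq, integral_const_mul]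
  ring

lemma integral_Ioi_Ioi_exp_neg_add_mul_abs_sub_rpow {α x : ℝ} (hα : 0 < α) (hx : 0 ≤ x) :
    ∫ w in Ioi 0, ∫ z in Ioi 0, exp (-(w + z)) * |z - w - x| ^ (α - 1)
      = (exp (-x) * ((∫ r in 0..x, exp r * r ^ (α - 1)) + Gamma α)
          + exp x * (Gamma α - ∫ r in 0..x, exp (-r) * r ^ (α - 1))) / 2 := by
  have hinner : ∀ w ∈ Ioi (0 : ℝ), ∫ z in Ioi 0, exp (-(w + z)) * |z - w - x| ^ (α - 1)
      = exp x * (exp (-(2 * (w + x))) * ((∫ r in 0..w + x, exp r * r ^ (α - 1)) + Gamma α)) := by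
    intro w hw
    have hsplit : ∀ z, exp (-(w + z)) * |z - w - x| ^ (α - 1)
        = exp (-w) * (exp (-z) * |z - (w + x)| ^ (α - 1)) := fun z => by
      rw [sub_sub, neg_add, exp_add, mul_assoc]
    simp_rw [hsplit]
    rw [integral_const_mul,
      integral_Ioi_exp_neg_mul_abs_sub_rpow hα (by linarith [mem_Ioi.mp hw]),
      ← mul_assoc, ← mul_assoc, ← exp_add, ← exp_add]
    ring_nf
  have hexp : exp x * exp (-(2 * x)) = exp (-x) := by rw [← exp_add]; ring_nf
  rw [setIntegral_congr_fun measurableSet_Ioi hinner, integral_const_mul,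
    setIntegral_Ioi_comp_add_right
      (fun a => exp (-(2 * a)) * ((∫ r in 0..a, exp r * r ^ (α - 1)) + Gamma α)) x,
    integral_Ioi_exp_neg_two_mul_mul_integral_exp_mul_rpow _ hα hx,
    ← intervalIntegral.integral_Ioi_sub_Ioi (GammaIntegral_convergent hα) hx,
    ← Gamma_eq_integral hα]
  linear_combination ((∫ r in 0..x, exp r * r ^ (α - 1)) + Gamma α) / 2 * hexp

lemma mul_integral_exp_mul_rpow_add {α x : ℝ} (c : ℝ) (hα : 0 < α) (hx : 0 ≤ x) :
    c * (∫ v in 0..x, exp (c * v) * v ^ α) + α * ∫ v in 0..x, exp (c * v) * v ^ (α - 1)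
      = exp (c * x) * x ^ α := by
  have hint := fun β (hβ : -1 < β) => intervalIntegrable_exp_mul_rpow c hβ 0 x
  have hderiv : ∀ v ∈ Ioo 0 x, HasDerivWithinAt (fun v => exp (c * v) * v ^ α)
      (c * (exp (c * v) * v ^ α) + α * (exp (c * v) * v ^ (α - 1))) (Ioi v) v := by
    intro v hv
    have h := ((hasDerivAt_id v).const_mul c).exp.mul (hasDerivAt_rpow_const (p := α)
      (Or.inl hv.1.ne'))
    exact (h.congr_deriv (by simp only [id]; ring)).hasDerivWithinAt
  have hcont : ContinuousOn (fun v => exp (c * v) * v ^ α) (Icc 0 x) :=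
    (continuous_exp.comp (continuous_const_mul c)).continuousOn.mul
      (continuousOn_id.rpow_const fun _ _ => Or.inr hα.le)
  have hFTC := intervalIntegral.integral_eq_sub_of_hasDeriv_right_of_le hx hcont hderiv
    (((hint α (by linarith)).const_mul c).add ((hint (α - 1) (by linarith)).const_mul α))
  rw [intervalIntegral.integral_add ((hint α (by linarith)).const_mul c)
    ((hint (α - 1) (by linarith)).const_mul α), intervalIntegral.integral_const_mul,
    intervalIntegral.integral_const_mul] at hFTC
  rw [hFTC, zero_rpow hα.ne', mul_zero, sub_zero]

lemma fH_eq {H x : ℝ} (hH : 1 / 2 < H) (hx : 0 ≤ x) :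
    fH H x = (2 * H - 1) *
      (exp (-x) * ((∫ v in 0..x, exp v * v ^ (2 * H - 1 - 1)) + Gamma (2 * H - 1))
        + exp x * (Gamma (2 * H - 1) - ∫ v in 0..x, exp (-v) * v ^ (2 * H - 1 - 1))) := by
  have hα : 0 < 2 * H - 1 := by linarith
  have hGamma : Gamma (2 * H) = (2 * H - 1) * Gamma (2 * H - 1) := by
    rw [← Gamma_add_one hα.ne', sub_add_cancel]
  have hplus := mul_integral_exp_mul_rpow_add 1 hα hx
  have hminus := mul_integral_exp_mul_rpow_add (-1) hα hx
  simp only [one_mul, neg_one_mul] at hplus hminus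
  rw [fH, fH1, fH2, hGamma]
  linear_combination (-exp (-x)) * hplus + exp x * hminus

lemma integral_Ioi_Ioi_comp_mul_left (g : ℝ → ℝ → ℝ) {l : ℝ} (hl : 0 < l) :
    ∫ w in Ioi 0, ∫ z in Ioi 0, g (l * w) (l * z)
      = (l ^ 2)⁻¹ * ∫ w in Ioi 0, ∫ z in Ioi 0, g w z := by
  simp_rw [integral_comp_mul_left_Ioi (g _) 0 hl, mul_zero, smul_eq_mul, integral_const_mul]
  rw [integral_comp_mul_left_Ioi (fun w => ∫ z in Ioi 0, g w z) 0 hl, mul_zero, smul_eq_mul,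
    ← mul_assoc, ← mul_inv, sq]

theorem stmt_13 (H l t : ℝ) (hH : H ∈ Set.Ioo (1/2 : ℝ) 1) (hl : 0 < l) (ht : 0 ≤ t) :
    (2 * H - 1) *
        ∫ w in Set.Ioi (0:ℝ), ∫ z in Set.Ioi (0:ℝ),
          Real.exp (-l * (w + z)) * |z - w - t| ^ (2 * H - 2) =
      fH H (l * t) / (2 * l ^ (2 * H)) := by
  have hhom : ∀ w z, exp (-l * (w + z)) * |z - w - t| ^ (2 * H - 2)
      = l ^ (2 - 2 * H)
        * (exp (-(l * w + l * z)) * |l * z - l * w - l * t| ^ (2 * H - 1 - 1)) := by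
    intro w z
    have hcancel : l ^ (2 - 2 * H) * l ^ (2 * H - 2) = 1 := by
      rw [← rpow_add hl, sub_add_sub_cancel', sub_self, rpow_zero]
    rw [← mul_sub, ← mul_sub, abs_mul, abs_of_pos hl, mul_rpow hl.le (abs_nonneg _),
      show 2 * H - 1 - 1 = 2 * H - 2 by ring, neg_mul, mul_add]
    linear_combination (-(exp (-(l * w + l * z)) * |z - w - t| ^ (2 * H - 2))) * hcancel
  have hscale := integral_Ioi_Ioi_comp_mul_left
    (fun w z => exp (-(w + z)) * |z - w - l * t| ^ (2 * H - 1 - 1)) hl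
  simp_rw [hhom, integral_const_mul]
  rw [hscale, integral_Ioi_Ioi_exp_neg_add_mul_abs_sub_rpow (by linarith [hH.1]) (by positivity),
    fH_eq hH.1 (by positivity), rpow_sub hl, rpow_two]
  field_simp
end

section
/- Let H ∈ (1/2, 1), let λ_1, …, λ_p be pairwise distinct positive real numbers, set K_i := λ_i^{p−1} / ∏_{j≠i}(λ_i − λ_j), and let t ≥ 0. Then ∑_{i=1}^{p} ∑_{j=1}^{p} K_i K_j (λ_i^{1−2H} f_H^{(1)}(λ_i t) + λ_j^{1−2H} f_H^{(2)}(λ_j t)) / (λ_i + λ_j) = (1/2) ∑_{i=1}^{p} [λ_i^{2p−2H−2} / ∏_{j≠i}(λ_i² − λ_j²)] f_H(λ_i t). (This is the algebraic identity showing that the auto-covariance of the FOU(λ_1,…,λ_p,σ,H) process equals (σ²H/2) ∑_i [λ_i^{2p−2H−2}/∏_{j≠i}(λ_i²−λ_j²)] f_H(λ_i t).) -/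
open MeasureTheory Real Filter Finset

/-!
Splitting `f_H^{(1)}(λ_i t)` and `f_H^{(2)}(λ_j t)` and using the symmetry of
`1/(λ_i + λ_j)`, the double sum becomes `∑_i K_i λ_i^{1-2H} f_H(λ_i t) S(λ_i)` with
`S(x) = ∑_j K_j / (x + λ_j)`. Lagrange interpolation of `X^{p-1}` at the nodes `-λ_j` gives the
partial fraction decomposition `S(x) = x^{p-1} / ∏_j (x + λ_j)`, and then
`K_i S(λ_i) λ_i^{1-2H}` is exactly half the coefficient on the right, because
`∏_{j≠i}(λ_i² - λ_j²) = ∏_{j≠i}(λ_i - λ_j) · ∏_{j≠i}(λ_i + λ_j)`.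
-/

section PartialFractions

variable {ι F : Type*} [Fintype ι] [DecidableEq ι] [Field F]

lemma prod_erase_sub_ne_zero {v : ι → F} (hv : Function.Injective v) (i : ι) :
    ∏ j ∈ univ.erase i, (v i - v j) ≠ 0 :=
  prod_ne_zero_iff.mpr fun _ hj => sub_ne_zero_of_ne fun h => (mem_erase.mp hj).1 (hv h).symm

open Polynomial in
/-- Lagrange interpolation of `X ^ (n - 1)` at the `n` nodes `-v i`, evaluated at `x`. -/
lemma sum_lagrange_pow_card_sub_one [Nonempty ι] {v : ι → F} (hv : Function.Injective v)
    (x : F) :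
    ∑ i, (v i ^ (Fintype.card ι - 1) / ∏ j ∈ univ.erase i, (v i - v j)) *
      ∏ j ∈ univ.erase i, (x + v j) = x ^ (Fintype.card ι - 1) := by
  have hnodes : Set.InjOn (fun i => -v i) (univ : Finset ι) :=
    fun a _ b _ h => hv (neg_injective h)
  have hdeg : (X ^ (Fintype.card ι - 1) : F[X]).degree < (univ : Finset ι).card := by
    rw [degree_X_pow, card_univ]
    exact_mod_cast Nat.sub_lt Fintype.card_pos one_pos
  have h := congrArg (eval x) (Lagrange.eq_interpolate hnodes hdeg)
  simp only [Lagrange.interpolate_apply, Lagrange.basis, Lagrange.basisDivisor,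
    eval_finsetSum, eval_mul, eval_C, eval_pow, eval_X, eval_prod, eval_sub] at h
  rw [h]
  refine sum_congr rfl fun i _ => ?_
  have hcard : (univ.erase i).card = Fintype.card ι - 1 := by
    rw [card_erase_of_mem (mem_univ i), card_univ]
  have hcoeff : (-v i) ^ (Fintype.card ι - 1) * ∏ j ∈ univ.erase i, (-v i - -v j)⁻¹
      = v i ^ (Fintype.card ι - 1) * ∏ j ∈ univ.erase i, (v i - v j)⁻¹ := by
    rw [← hcard, ← prod_const (-v i), ← prod_const (v i), ← prod_mul_distrib,
      ← prod_mul_distrib]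
    refine prod_congr rfl fun j _ => ?_
    rw [show -v i - -v j = -(v i - v j) by ring, inv_neg]
    ring
  have hfactor : ∏ j ∈ univ.erase i, (x - -v j) = ∏ j ∈ univ.erase i, (x + v j) :=
    prod_congr rfl fun j _ => sub_neg_eq_add x (v j)
  rw [div_eq_mul_inv, ← prod_inv_distrib, prod_mul_distrib, ← mul_assoc, hcoeff, hfactor]

lemma sum_div_add_eq_pow_div_prod [Nonempty ι] {v : ι → F} (hv : Function.Injective v)
    {x : F} (hx : ∀ j, x + v j ≠ 0) :
    ∑ j, (v j ^ (Fintype.card ι - 1) / ∏ k ∈ univ.erase j, (v j - v k)) / (x + v j)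
      = x ^ (Fintype.card ι - 1) / ∏ j, (x + v j) := by
  rw [eq_div_iff (prod_ne_zero_iff.mpr fun j _ => hx j), ← sum_lagrange_pow_card_sub_one hv x,
    sum_mul]
  refine sum_congr rfl fun j _ => ?_
  have := prod_erase_sub_ne_zero hv j
  have := hx j
  rw [← mul_prod_erase univ _ (mem_univ j)]
  field_simp

end PartialFractions

lemma sum_sum_mul_add_div_add {ι F : Type*} [Fintype ι] [Field F] (K a b v : ι → F) :
    ∑ i, ∑ j, K i * K j * (a i + b j) / (v i + v j)
      = ∑ i, K i * (a i + b i) * ∑ j, K j / (v i + v j) := by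
  have hsplit : ∀ i j, K i * K j * (a i + b j) / (v i + v j)
      = K i * a i * (K j / (v i + v j)) + K j * b j * (K i / (v j + v i)) := fun i j => by
    rw [add_comm (v j)]; ring
  simp_rw [hsplit, sum_add_distrib, ← mul_sum]
  rw [sum_comm (f := fun i j => K j * b j * (K i / (v j + v i))), ← sum_add_distrib]
  simp_rw [← mul_sum, ← add_mul, mul_add]

lemma rpow_two_mul_natCast_sub {L : ℝ} (hL : 0 < L) {n : ℕ} (hn : 0 < n) (H : ℝ) :
    L ^ (2 * (n : ℝ) - 2 * H - 2) = (L ^ (n - 1)) ^ 2 * L ^ (1 - 2 * H) / L := by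
  rw [← rpow_natCast L (n - 1), Nat.cast_sub hn, Nat.cast_one, ← rpow_mul_natCast hL.le,
    ← rpow_add hL, ← rpow_sub_one hL.ne']
  ring_nf

theorem stmt_17_general (H : ℝ) (p : ℕ)
    (lam : Fin p → ℝ) (hpos : ∀ i, 0 < lam i) (hinj : Function.Injective lam)
    (K : Fin p → ℝ)
    (hK : ∀ i, K i = lam i ^ (p - 1) / ∏ j ∈ Finset.univ.erase i, (lam i - lam j))
    (t : ℝ) :
    ∑ i, ∑ j, K i * K j *
        (lam i ^ (1 - 2 * H) * fH1 H (lam i * t) + lam j ^ (1 - 2 * H) * fH2 H (lam j * t)) /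
          (lam i + lam j) =
      (1/2 : ℝ) * ∑ i,
        (lam i ^ (2 * (p:ℝ) - 2 * H - 2) /
            ∏ j ∈ Finset.univ.erase i, (lam i ^ 2 - lam j ^ 2)) * fH H (lam i * t) := by
  rcases Nat.eq_zero_or_pos p with rfl | hp
  · simp
  have : Nonempty (Fin p) := ⟨⟨0, hp⟩⟩
  rw [sum_sum_mul_add_div_add, mul_sum]
  refine sum_congr rfl fun i _ => ?_
  have hsum : ∑ j, K j / (lam i + lam j) = lam i ^ (p - 1) / ∏ j, (lam i + lam j) := by
    simpa only [hK, Fintype.card_fin] using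
      sum_div_add_eq_pow_div_prod hinj fun j => (add_pos (hpos i) (hpos j)).ne'
  have hsq : ∏ j ∈ univ.erase i, (lam i ^ 2 - lam j ^ 2)
      = (∏ j ∈ univ.erase i, (lam i - lam j)) * ∏ j ∈ univ.erase i, (lam i + lam j) := by
    rw [← prod_mul_distrib]
    exact prod_congr rfl fun j _ => by ring
  have hL := hpos i
  have hD := prod_erase_sub_ne_zero hinj i
  have hE : ∏ j ∈ univ.erase i, (lam i + lam j) ≠ 0 :=
    (prod_pos fun j _ => add_pos (hpos i) (hpos j)).ne'
  rw [hsum, hK i, fH, hsq, ← mul_prod_erase univ _ (mem_univ i),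
    rpow_two_mul_natCast_sub hL hp H]
  field_simp
  ring

theorem stmt_17 (H : ℝ) (hH : H ∈ Set.Ioo (1/2 : ℝ) 1) (p : ℕ)
    (lam : Fin p → ℝ) (hpos : ∀ i, 0 < lam i) (hinj : Function.Injective lam)
    (K : Fin p → ℝ)
    (hK : ∀ i, K i = lam i ^ (p - 1) / ∏ j ∈ Finset.univ.erase i, (lam i - lam j))
    (t : ℝ) (ht : 0 ≤ t) :
    ∑ i, ∑ j, K i * K j *
        (lam i ^ (1 - 2 * H) * fH1 H (lam i * t) + lam j ^ (1 - 2 * H) * fH2 H (lam j * t)) /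
          (lam i + lam j) =
      (1/2 : ℝ) * ∑ i,
        (lam i ^ (2 * (p:ℝ) - 2 * H - 2) /
            ∏ j ∈ Finset.univ.erase i, (lam i ^ 2 - lam j ^ 2)) * fH H (lam i * t) :=
  stmt_17_general H p lam hpos hinj K hK t
end
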